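/- Assume that the characteristic of k is different from 2. Then every irreducible representation ρ of G over k is a direct summand of an induced representation: there exist an irreducible H-representation σ and a G-subrepresentation of Ind_H^G σ which is isomorphic to ρ and admits a G-stable complement. -/

import Mathlib

/-!
Fix `g₀ ∉ H`. For `H`-equivariant maps `p : V → W` and `j : W → V`, the maps
`v ↦ (x ↦ p (ρ x⁻¹ v))` into `Ind_H^G σ` and `f ↦ j (f 1) + ρ g₀ (j (f g₀))` back to `V` are
`G`-equivariant, so `ρ` is a `G`-direct summand of `Ind_H^G σ` as soon as their composite is
invertible.

If `ρ|_H` is irreducible, take `σ = ρ|_H` and `p = j = id`: the composite is `2`, invertible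
because `char k ≠ 2`. Otherwise let `W₀` be a proper nonzero `H`-stable subspace. As
`G = H ∪ g₀H`, every `g ∈ G` either fixes or swaps the subspaces `W₀` and `g₀W₀`, so
`W₀ ∩ g₀W₀` and `W₀ + g₀W₀` are `G`-stable and `V = W₀ ⊕ g₀W₀`; the same argument for an
`H`-stable subspace of `W₀` shows that `W₀` is an irreducible `H`-representation. With `p` the
projection onto `W₀` along `g₀W₀` and `j` the inclusion, the composite is the identity.
-/

universe u

variable {k : Type u} [Field k] {G : Type u} [Group G] (H : Subgroup G)

/-- The underlying space of the induced representation `Ind_H^G σ = k[G] ⊗_{k[H]} W`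
(`H` of finite index): functions `f : G → W` with `f (x * h) = σ h⁻¹ (f x)` for `h ∈ H`.
For a finite-index subgroup this function model realizes the induced representation. -/
def indSupport {W : Type u} [AddCommGroup W] [Module k W]
    (σ : Representation k H W) : Submodule k (G → W) where
  carrier := {f | ∀ (h : H) (x : G), f (x * (h : G)) = σ h⁻¹ (f x)}
  add_mem' := by
    intro a b ha hb h x
    simp only [Pi.add_apply, ha h x, hb h x, map_add]
  zero_mem' := by
    intro h x
    simp
  smul_mem' := by
    intro c f hf h x
    simp only [Pi.smul_apply, hf h x, map_smul]

/-- The action of `g : G` on the induced representation, by right translation. -/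
def indAct {W : Type u} [AddCommGroup W] [Module k W]
    (σ : Representation k H W) (g : G) :
    indSupport H σ →ₗ[k] indSupport H σ where
  toFun f := ⟨fun x => (f : G → W) (g⁻¹ * x), by
    intro h x
    simpa [mul_assoc] using f.2 h (g⁻¹ * x)⟩
  map_add' f₁ f₂ := rfl
  map_smul' c f := rfl

/-- The induced representation `Ind_H^G σ` of `σ : Representation k H W`. -/
def indRep {W : Type u} [AddCommGroup W] [Module k W]
    (σ : Representation k H W) : Representation k G ↥(indSupport H σ) where
  toFun := indAct H σ
  map_one' := by
    ext f x
    simp [indAct]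
  map_mul' g₁ g₂ := by
    ext f x
    simp [indAct, mul_assoc]

section IndexTwo

variable {H}

theorem apply_eq_of_mem_of_index_two {M : Type*} (hH : H.index = 2) {g₀ : G} (hg₀ : g₀ ∉ H)
    {F : G → M} (hF : ∀ x, ∀ h ∈ H, F (x * h) = F x) {y : G} (hy : y ∈ H) :
    F y = F 1 ∧ F (y * g₀) = F g₀ := by
  have hF' : ∀ x y, x⁻¹ * y ∈ H → F y = F x := fun x y h => by simpa using hF x _ h
  exact ⟨hF' 1 y (by simpa using hy),
    hF' g₀ _ (by simp [Subgroup.mul_mem_iff_of_index_two hH, hg₀, hy])⟩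

theorem apply_eq_of_notMem_of_index_two {M : Type*} (hH : H.index = 2) {g₀ : G}
    (hg₀ : g₀ ∉ H) {F : G → M} (hF : ∀ x, ∀ h ∈ H, F (x * h) = F x) {y : G} (hy : y ∉ H) :
    F y = F g₀ ∧ F (y * g₀) = F 1 := by
  have hF' : ∀ x y, x⁻¹ * y ∈ H → F y = F x := fun x y h => by simpa using hF x _ h
  exact ⟨hF' g₀ y (by simp [Subgroup.mul_mem_iff_of_index_two hH, hg₀, hy]),
    hF' 1 _ (by simp [Subgroup.mul_mem_iff_of_index_two hH, hg₀, hy])⟩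

end IndexTwo

section Frobenius

variable {H} {V W : Type u} [AddCommGroup V] [Module k V] [AddCommGroup W] [Module k W]
  (ρ : Representation k G V) (σ : Representation k H W)
  (p : V →ₗ[k] W) (hp : ∀ (h : H) (v : V), p (ρ h v) = σ h (p v))

theorem indRep_apply_apply (g : G) (f : indSupport H σ) (x : G) :
    (indRep H σ g f : G → W) x = (f : G → W) (g⁻¹ * x) := rfl

def toInd : V →ₗ[k] indSupport H σ where
  toFun v := ⟨fun x => p (ρ x⁻¹ v), fun h x => by
    change p (ρ (x * h)⁻¹ v) = σ h⁻¹ (p (ρ x⁻¹ v))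
    rw [mul_inv_rev, map_mul, Module.End.mul_apply, ← Subgroup.coe_inv, hp]⟩
  map_add' v w := by ext; simp
  map_smul' c v := by ext; simp

theorem toInd_apply_apply (v : V) (x : G) : (toInd ρ σ p hp v : G → W) x = p (ρ x⁻¹ v) :=
  rfl

theorem toInd_comm (g : G) (v : V) :
    toInd ρ σ p hp (ρ g v) = indRep H σ g (toInd ρ σ p hp v) := by
  ext x
  simp [toInd_apply_apply, indRep_apply_apply, map_mul]

/-- Sum of `ρ r (j (f r))` over the coset representatives `r ∈ {1, g₀}`. When `H` has index two
and `g₀ ∉ H`, `r ↦ ρ r (j (f r))` is constant on cosets, so the sum does not depend on the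
representatives; this is what makes `ofInd` `G`-equivariant. -/
def ofInd (j : W →ₗ[k] V) (g₀ : G) : indSupport H σ →ₗ[k] V where
  toFun f := j ((f : G → W) 1) + ρ g₀ (j ((f : G → W) g₀))
  map_add' f₁ f₂ := by simp [add_add_add_comm]
  map_smul' c f := by simp

theorem ofInd_comm (hH : H.index = 2) {g₀ : G} (hg₀ : g₀ ∉ H) (j : W →ₗ[k] V)
    (hj : ∀ (h : H) (w : W), j (σ h w) = ρ h (j w)) (g : G) (f : indSupport H σ) :
    ofInd ρ σ j g₀ (indRep H σ g f) = ρ g (ofInd ρ σ j g₀ f) := by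
  set F : G → V := fun x => ρ x (j ((f : G → W) x))
  have hF : ∀ x, ∀ h ∈ H, F (x * h) = F x := fun x h hh => by
    simp only [F]
    rw [f.2 ⟨h, hh⟩ x, hj, ← Module.End.mul_apply, ← map_mul]
    simp
  have hsum : F g⁻¹ + F (g⁻¹ * g₀) = F 1 + F g₀ := by
    by_cases hg : g⁻¹ ∈ H
    · obtain ⟨h₁, h₂⟩ := apply_eq_of_mem_of_index_two hH hg₀ hF hg
      rw [h₁, h₂]
    · obtain ⟨h₁, h₂⟩ := apply_eq_of_notMem_of_index_two hH hg₀ hF hg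
      rw [h₁, h₂, add_comm]
  calc ofInd ρ σ j g₀ (indRep H σ g f) = ρ g (F g⁻¹ + F (g⁻¹ * g₀)) := by
        simp [F, ofInd, indRep_apply_apply, map_mul]
    _ = ρ g (ofInd ρ σ j g₀ f) := by rw [hsum]; simp [F, ofInd]

theorem ofInd_toInd (j : W →ₗ[k] V) (g₀ : G) (v : V) :
    ofInd ρ σ j g₀ (toInd ρ σ p hp v) = j (p v) + ρ g₀ (j (p (ρ g₀⁻¹ v))) := by
  simp [ofInd, toInd_apply_apply]

end Frobenius

section DirectSummand

variable {R Γ V M : Type*} [CommRing R] [Monoid Γ] [AddCommGroup V] [Module R V]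
  [AddCommGroup M] [Module R M]

def IsDirectSummand (ρ : Representation R Γ V) (τ : Representation R Γ M) : Prop :=
  ∃ U C : Submodule R M,
    (∀ g : Γ, ∀ m ∈ U, τ g m ∈ U) ∧ (∀ g : Γ, ∀ m ∈ C, τ g m ∈ C) ∧ IsCompl U C ∧
    ∃ ι : V →ₗ[R] M, Function.Injective ι ∧ LinearMap.range ι = U ∧
      ∀ (g : Γ) (v : V), ι (ρ g v) = τ g (ι v)

theorem isDirectSummand_of_comp_eq_id (ρ : Representation R Γ V) (τ : Representation R Γ M)
    (ι : V →ₗ[R] M) (π : M →ₗ[R] V) (hι : ∀ g v, ι (ρ g v) = τ g (ι v))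
    (hπ : ∀ g m, π (τ g m) = ρ g (π m)) (hπι : π ∘ₗ ι = LinearMap.id) :
    IsDirectSummand ρ τ := by
  have hinj : Function.Injective ι :=
    Function.LeftInverse.injective (g := π) (LinearMap.ext_iff.1 hπι)
  have hsurj : Function.Surjective π :=
    Function.RightInverse.surjective (g := ι) (LinearMap.ext_iff.1 hπι)
  have hidem : IsIdempotentElem (ι ∘ₗ π) := by
    rw [IsIdempotentElem, Module.End.mul_eq_comp, LinearMap.comp_assoc,
      ← LinearMap.comp_assoc π, hπι, LinearMap.id_comp]
  have hcompl := LinearMap.IsIdempotentElem.isCompl hidem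
  rw [LinearMap.range_comp_of_range_eq_top _ (LinearMap.range_eq_top.2 hsurj),
    LinearMap.ker_comp_of_ker_eq_bot _ (LinearMap.ker_eq_bot.2 hinj)] at hcompl
  refine ⟨LinearMap.range ι, LinearMap.ker π, ?_, fun g m hm => ?_, hcompl, ι, hinj, rfl, hι⟩
  · rintro g _ ⟨v, rfl⟩
    exact ⟨ρ g v, hι g v⟩
  · rw [LinearMap.mem_ker] at hm ⊢
    rw [hπ, hm, map_zero]

end DirectSummand

theorem Submodule.projection_apply_comm {R E : Type*} [Ring R] [AddCommGroup E] [Module R E]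
    {A B : Submodule R E} (hc : IsCompl A B) {T : E →ₗ[R] E} (hA : ∀ v ∈ A, T v ∈ A)
    (hB : ∀ v ∈ B, T v ∈ B) (v : E) : A.projection B hc (T v) = T (A.projection B hc v) := by
  have hcomm := (LinearMap.IsIdempotentElem.commute_iff
      (Submodule.isIdempotentElem_projection hc)).2
    ⟨by rw [Submodule.range_projection]; exact (Module.End.mem_invtSubmodule T).2 hA,
      by rw [Submodule.ker_projection]; exact (Module.End.mem_invtSubmodule T).2 hB⟩
  exact LinearMap.congr_fun hcomm.eq v

section Restriction

variable {H} {V : Type u} [AddCommGroup V] [Module k V]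

theorem isDirectSummand_indRep_comp_subtype (hH : H.index = 2) {g₀ : G} (hg₀ : g₀ ∉ H)
    (htwo : (2 : k) ≠ 0) (ρ : Representation k G V) :
    IsDirectSummand ρ (indRep H (ρ.comp H.subtype)) := by
  refine isDirectSummand_of_comp_eq_id ρ _ (toInd ρ (ρ.comp H.subtype) .id fun _ _ => rfl)
    ((2 : k)⁻¹ • ofInd ρ (ρ.comp H.subtype) .id g₀) (toInd_comm ρ _ _ _) (fun g f => ?_) ?_
  · rw [LinearMap.smul_apply, ofInd_comm ρ _ hH hg₀ _ (fun _ _ => rfl), LinearMap.smul_apply,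
      map_smul]
  · ext v
    change (2 : k)⁻¹ • (ρ 1⁻¹ v + ρ g₀ (ρ g₀⁻¹ v)) = v
    simp [← two_smul k v, smul_smul, inv_mul_cancel₀ htwo]

end Restriction

namespace Subrepresentation

variable {H} {V : Type u} [AddCommGroup V] [Module k V] {ρ : Representation k G V}
  (W₀ : Subrepresentation (ρ.comp H.subtype))

theorem map_mul_of_mem (x : G) {h : G} (hh : h ∈ H) :
    W₀.toSubmodule.map (ρ (x * h)) = W₀.toSubmodule.map (ρ x) := by
  have hW₀ : W₀.toSubmodule.map (ρ h) = W₀.toSubmodule :=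
    le_antisymm
      (Submodule.map_le_iff_le_comap.2 fun v hv => W₀.apply_mem_toSubmodule ⟨h, hh⟩ hv)
      fun v hv => ⟨ρ h⁻¹ v, W₀.apply_mem_toSubmodule ⟨h, hh⟩⁻¹ hv, by simp⟩
  rw [map_mul, Module.End.mul_eq_comp, Submodule.map_comp, hW₀]

theorem apply_mem_map_mul {a : G} {v : V} (x : G) (hv : v ∈ W₀.toSubmodule.map (ρ a)) :
    ρ x v ∈ W₀.toSubmodule.map (ρ (x * a)) := by
  rw [map_mul, Module.End.mul_eq_comp, Submodule.map_comp]
  exact Submodule.mem_map_of_mem hv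

theorem map_apply_eq_of_mem (hH : H.index = 2) {g₀ : G} (hg₀ : g₀ ∉ H) {x : G} (hx : x ∈ H) :
    W₀.toSubmodule.map (ρ x) = W₀.toSubmodule ∧
      W₀.toSubmodule.map (ρ (x * g₀)) = W₀.toSubmodule.map (ρ g₀) := by
  simpa only [map_one, Module.End.one_eq_id, Submodule.map_id] using
    apply_eq_of_mem_of_index_two (F := fun y => W₀.toSubmodule.map (ρ y)) hH hg₀
      (fun x _ hh => W₀.map_mul_of_mem x hh) hx

theorem map_apply_eq_of_notMem (hH : H.index = 2) {g₀ : G} (hg₀ : g₀ ∉ H) {x : G}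
    (hx : x ∉ H) :
    W₀.toSubmodule.map (ρ x) = W₀.toSubmodule.map (ρ g₀) ∧
      W₀.toSubmodule.map (ρ (x * g₀)) = W₀.toSubmodule := by
  simpa only [map_one, Module.End.one_eq_id, Submodule.map_id] using
    apply_eq_of_notMem_of_index_two (F := fun y => W₀.toSubmodule.map (ρ y)) hH hg₀
      (fun x _ hh => W₀.map_mul_of_mem x hh) hx

theorem apply_mem_map_of_mem (hH : H.index = 2) {g₀ : G} (hg₀ : g₀ ∉ H) {h : G} (hh : h ∈ H)
    {v : V} (hv : v ∈ W₀.toSubmodule.map (ρ g₀)) : ρ h v ∈ W₀.toSubmodule.map (ρ g₀) :=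
  (W₀.map_apply_eq_of_mem hH hg₀ hh).2 ▸ W₀.apply_mem_map_mul h hv

theorem apply_mem_of_mem_map (hH : H.index = 2) {g₀ : G} (hg₀ : g₀ ∉ H) {v : V}
    (hv : v ∈ W₀.toSubmodule.map (ρ g₀)) : ρ g₀ v ∈ W₀.toSubmodule :=
  (W₀.map_apply_eq_of_notMem hH hg₀ hg₀).2 ▸ W₀.apply_mem_map_mul g₀ hv

theorem apply_mem_inf_map (hH : H.index = 2) {g₀ : G} (hg₀ : g₀ ∉ H) (x : G) {v : V}
    (hv : v ∈ W₀.toSubmodule ⊓ W₀.toSubmodule.map (ρ g₀)) :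
    ρ x v ∈ W₀.toSubmodule ⊓ W₀.toSubmodule.map (ρ g₀) := by
  obtain ⟨hv₁, hv₂⟩ := Submodule.mem_inf.1 hv
  have h₁ := Submodule.mem_map_of_mem (f := ρ x) hv₁
  have h₂ := W₀.apply_mem_map_mul x hv₂
  by_cases hx : x ∈ H
  · obtain ⟨e₁, e₂⟩ := W₀.map_apply_eq_of_mem hH hg₀ hx
    exact ⟨e₁ ▸ h₁, e₂ ▸ h₂⟩
  · obtain ⟨e₁, e₂⟩ := W₀.map_apply_eq_of_notMem hH hg₀ hx
    exact ⟨e₂ ▸ h₂, e₁ ▸ h₁⟩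

theorem apply_mem_sup_map (hH : H.index = 2) {g₀ : G} (hg₀ : g₀ ∉ H) (x : G) {v : V}
    (hv : v ∈ W₀.toSubmodule ⊔ W₀.toSubmodule.map (ρ g₀)) :
    ρ x v ∈ W₀.toSubmodule ⊔ W₀.toSubmodule.map (ρ g₀) := by
  obtain ⟨a, ha, b, hb, rfl⟩ := Submodule.mem_sup.1 hv
  have h₁ := Submodule.mem_map_of_mem (f := ρ x) ha
  have h₂ := W₀.apply_mem_map_mul x hb
  rw [map_add]
  by_cases hx : x ∈ H
  · obtain ⟨e₁, e₂⟩ := W₀.map_apply_eq_of_mem hH hg₀ hx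
    exact add_mem (Submodule.mem_sup_left (e₁ ▸ h₁)) (Submodule.mem_sup_right (e₂ ▸ h₂))
  · obtain ⟨e₁, e₂⟩ := W₀.map_apply_eq_of_notMem hH hg₀ hx
    exact add_mem (Submodule.mem_sup_right (e₁ ▸ h₁)) (Submodule.mem_sup_left (e₂ ▸ h₂))

theorem isCompl_map_of_irreducible (hH : H.index = 2) {g₀ : G} (hg₀ : g₀ ∉ H)
    (hirr : ∀ U : Submodule k V, (∀ g : G, ∀ v ∈ U, ρ g v ∈ U) → U = ⊥ ∨ U = ⊤)
    (hbot : W₀.toSubmodule ≠ ⊥) (htop : W₀.toSubmodule ≠ ⊤) :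
    IsCompl W₀.toSubmodule (W₀.toSubmodule.map (ρ g₀)) := by
  refine IsCompl.of_eq ?_ ?_
  · refine (hirr _ fun x _ hv => W₀.apply_mem_inf_map hH hg₀ x hv).resolve_right fun h => ?_
    exact htop (top_le_iff.1 (h ▸ inf_le_left))
  · refine (hirr _ fun x _ hv => W₀.apply_mem_sup_map hH hg₀ x hv).resolve_left fun h => ?_
    exact hbot (le_bot_iff.1 (h ▸ le_sup_left))

theorem eq_bot_or_eq_top_of_isCompl_map (hH : H.index = 2) {g₀ : G} (hg₀ : g₀ ∉ H)
    (hirr : ∀ U : Submodule k V, (∀ g : G, ∀ v ∈ U, ρ g v ∈ U) → U = ⊥ ∨ U = ⊤)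
    (hc : IsCompl W₀.toSubmodule (W₀.toSubmodule.map (ρ g₀))) (U : Submodule k W₀.toSubmodule)
    (hU : ∀ h : H, ∀ w ∈ U, W₀.toRepresentation h w ∈ U) : U = ⊥ ∨ U = ⊤ := by
  let U' : Subrepresentation (ρ.comp H.subtype) :=
    ⟨U.map W₀.toSubmodule.subtype, by rintro h _ ⟨w, hw, rfl⟩; exact ⟨_, hU h w hw, rfl⟩⟩
  have hinj := Submodule.map_injective_of_injective W₀.toSubmodule.injective_subtype
  have hle : U'.toSubmodule ≤ W₀.toSubmodule := Submodule.map_subtype_le _ _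
  rcases hirr _ fun x _ hv => U'.apply_mem_sup_map hH hg₀ x hv with h | h
  · left
    exact hinj ((le_bot_iff.1 (h ▸ le_sup_left)).trans (Submodule.map_bot _).symm)
  · right
    have hdisj : U'.toSubmodule.map (ρ g₀) ⊓ W₀.toSubmodule = ⊥ :=
      eq_bot_iff.2 ((inf_le_inf_right _ (Submodule.map_mono hle)).trans hc.symm.inf_eq_bot.le)
    have hU' : U'.toSubmodule = W₀.toSubmodule :=
      calc U'.toSubmodule = U'.toSubmodule ⊔ U'.toSubmodule.map (ρ g₀) ⊓ W₀.toSubmodule := by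
            rw [hdisj, sup_bot_eq]
        _ = (U'.toSubmodule ⊔ U'.toSubmodule.map (ρ g₀)) ⊓ W₀.toSubmodule :=
            (sup_inf_assoc_of_le _ hle).symm
        _ = W₀.toSubmodule := by rw [h, top_inf_eq]
    exact hinj (hU'.trans (Submodule.map_subtype_top _).symm)

theorem projection_add_apply_projection_inv (hH : H.index = 2) {g₀ : G} (hg₀ : g₀ ∉ H)
    (hc : IsCompl W₀.toSubmodule (W₀.toSubmodule.map (ρ g₀))) (v : V) :
    W₀.toSubmodule.projection _ hc v + ρ g₀ (W₀.toSubmodule.projection _ hc (ρ g₀⁻¹ v)) = v := by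
  set a := W₀.toSubmodule.projection _ hc (ρ g₀⁻¹ v)
  have ha : ρ g₀ a ∈ W₀.toSubmodule.map (ρ g₀) :=
    Submodule.mem_map_of_mem (Submodule.projection_apply_mem hc _)
  have hb : ρ g₀ (ρ g₀⁻¹ v - a) ∈ W₀.toSubmodule :=
    W₀.apply_mem_of_mem_map hH hg₀ (Submodule.sub_projection_mem hc _)
  have hv : v = ρ g₀ (ρ g₀⁻¹ v - a) + ρ g₀ a := by
    rw [← map_add, sub_add_cancel, Representation.self_inv_apply]
  nth_rewrite 1 [hv]
  rw [map_add, Submodule.projection_apply_of_mem_left hc hb,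
    Submodule.projection_apply_of_mem_right hc ha, add_zero, ← hv]

theorem isDirectSummand_indRep_toRepresentation (hH : H.index = 2) {g₀ : G} (hg₀ : g₀ ∉ H)
    (hc : IsCompl W₀.toSubmodule (W₀.toSubmodule.map (ρ g₀))) :
    IsDirectSummand ρ (indRep H W₀.toRepresentation) := by
  have hp : ∀ (h : H) (v : V), W₀.toSubmodule.projectionOnto _ hc (ρ h v) =
      W₀.toRepresentation h (W₀.toSubmodule.projectionOnto _ hc v) := fun h v =>
    Subtype.ext (Submodule.projection_apply_comm hc (fun _ hw => W₀.apply_mem_toSubmodule h hw)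
      (fun _ hw => W₀.apply_mem_map_of_mem hH hg₀ h.2 hw) v)
  refine isDirectSummand_of_comp_eq_id ρ _ (toInd ρ _ _ hp)
    (ofInd ρ _ W₀.toSubmodule.subtype g₀) (toInd_comm ρ _ _ hp)
    (ofInd_comm ρ _ hH hg₀ _ fun _ _ => rfl) ?_
  ext v
  rw [LinearMap.comp_apply, ofInd_toInd]
  exact W₀.projection_add_apply_projection_inv hH hg₀ hc v

end Subrepresentation

theorem statement6 (hH : H.index = 2) (hchar : ringChar k ≠ 2)
    {V : Type u} [AddCommGroup V] [Module k V]
    (ρ : Representation k G V)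
    (hirr : Nontrivial V ∧
      ∀ U : Submodule k V, (∀ g : G, ∀ v ∈ U, ρ g v ∈ U) → U = ⊥ ∨ U = ⊤) :
    ∃ (W : ModuleCat.{u} k) (σ : Representation k H ↥W),
      -- `σ` is an irreducible representation of `H`
      (Nontrivial ↥W ∧
        ∀ U : Submodule k ↥W, (∀ h : H, ∀ w ∈ U, σ h w ∈ U) → U = ⊥ ∨ U = ⊤) ∧
      -- there is a `G`-subrepresentation `U` of `Ind_H^G σ`, with a `G`-stable
      -- complement `C`, which is isomorphic to `ρ`
      ∃ U C : Submodule k ↥(indSupport H σ),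
        (∀ g : G, ∀ f ∈ U, indRep H σ g f ∈ U) ∧
        (∀ g : G, ∀ f ∈ C, indRep H σ g f ∈ C) ∧
        IsCompl U C ∧
        ∃ ι : V →ₗ[k] ↥(indSupport H σ), Function.Injective ι ∧
          LinearMap.range ι = U ∧
          ∀ (g : G) (v : V), ι (ρ g v) = indRep H σ g (ι v) := by
  obtain ⟨g₀, hg₀, -⟩ := Subgroup.index_eq_two_iff_exists_notMem_and.1 hH
  by_cases hres : ∀ U : Submodule k V, (∀ h : H, ∀ v ∈ U, ρ h v ∈ U) → U = ⊥ ∨ U = ⊤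
  · exact ⟨ModuleCat.of k V, ρ.comp H.subtype, ⟨hirr.1, hres⟩,
      isDirectSummand_indRep_comp_subtype hH hg₀ (Ring.two_ne_zero hchar) ρ⟩
  · push Not at hres
    obtain ⟨U, hU, hbot, htop⟩ := hres
    let W₀ : Subrepresentation (ρ.comp H.subtype) := ⟨U, fun h _ hv => hU h _ hv⟩
    have hc := W₀.isCompl_map_of_irreducible hH hg₀ hirr.2 hbot htop
    exact ⟨ModuleCat.of k U, W₀.toRepresentation,
      ⟨Submodule.nontrivial_iff_ne_bot.2 hbot,
        W₀.eq_bot_or_eq_top_of_isCompl_map hH hg₀ hirr.2 hc⟩,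
      W₀.isDirectSummand_indRep_toRepresentation hH hg₀ hc⟩
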